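/- Let G be a group, A a finite abelian group, ρ : G → Aut(A) a homomorphism, π : G → A a bijective 1-cocycle, A* = Hom(A, ℂˣ), and G̃ = G ⋉ A* (with g acting on χ by χ ∘ ρ(g)⁻¹); regard G and A* as subgroups of G̃. Define T : A → A by T(x) = π((π⁻¹(x⁻¹))⁻¹), equivalently π⁻¹(x⁻¹)·π⁻¹(T(x)) = 1 in G. Then T is a bijection of A, and the element J̄ = |A|⁻¹ Σ_{x ∈ A, χ ∈ A*} χ(x) · π⁻¹(x) ⊗ χ ∈ ℂ[G̃] ⊗ ℂ[G̃] is invertible, with J̄⁻¹ = |A|⁻¹ Σ_{z ∈ A, τ ∈ A*} τ(z)⁻¹ · π⁻¹(T(z)) ⊗ τ. -/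

import Mathlib

open TensorProduct

noncomputable section

variable (G : Type*) [Group G]

/-- Comultiplication on the group algebra `ℂ[G]`, determined by `Δ(g) = g ⊗ g`. -/
def GroupAlgebra.comul :
    MonoidAlgebra ℂ G →ₐ[ℂ] MonoidAlgebra ℂ G ⊗[ℂ] MonoidAlgebra ℂ G :=
  (MonoidAlgebra.lift ℂ _ G)
    { toFun := fun g => MonoidAlgebra.of ℂ G g ⊗ₜ[ℂ] MonoidAlgebra.of ℂ G g
      map_one' := by simp [Algebra.TensorProduct.one_def, MonoidAlgebra.one_def]
      map_mul' := fun g h => by simp [Algebra.TensorProduct.tmul_mul_tmul] }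

/-- Counit on the group algebra `ℂ[G]`, determined by `ε(g) = 1`. -/
def GroupAlgebra.counit : MonoidAlgebra ℂ G →ₐ[ℂ] ℂ :=
  (MonoidAlgebra.lift ℂ ℂ G) 1

/-- The equation `((Δ ⊗ id)(J))·(J ⊗ 1) = ((id ⊗ Δ)(J))·(1 ⊗ J)` in `ℂ[G] ⊗ ℂ[G] ⊗ ℂ[G]`. -/
def GroupAlgebra.TwistEq (J : MonoidAlgebra ℂ G ⊗[ℂ] MonoidAlgebra ℂ G) : Prop :=
  (Algebra.TensorProduct.assoc ℂ ℂ ℂ (MonoidAlgebra ℂ G) (MonoidAlgebra ℂ G) (MonoidAlgebra ℂ G))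
      ((Algebra.TensorProduct.map (GroupAlgebra.comul G) (AlgHom.id ℂ (MonoidAlgebra ℂ G))) J) *
    (Algebra.TensorProduct.assoc ℂ ℂ ℂ (MonoidAlgebra ℂ G) (MonoidAlgebra ℂ G) (MonoidAlgebra ℂ G))
      (J ⊗ₜ[ℂ] (1 : MonoidAlgebra ℂ G)) =
  (Algebra.TensorProduct.map (AlgHom.id ℂ (MonoidAlgebra ℂ G)) (GroupAlgebra.comul G)) J *
    ((1 : MonoidAlgebra ℂ G) ⊗ₜ[ℂ] J)

/-- The equations `(ε ⊗ id)(J) = 1` and `(id ⊗ ε)(J) = 1`. -/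
def GroupAlgebra.CounitEq (J : MonoidAlgebra ℂ G ⊗[ℂ] MonoidAlgebra ℂ G) : Prop :=
  (Algebra.TensorProduct.lid ℂ (MonoidAlgebra ℂ G))
      ((Algebra.TensorProduct.map (GroupAlgebra.counit G) (AlgHom.id ℂ (MonoidAlgebra ℂ G))) J) = 1 ∧
  (Algebra.TensorProduct.rid ℂ ℂ (MonoidAlgebra ℂ G))
      ((Algebra.TensorProduct.map (AlgHom.id ℂ (MonoidAlgebra ℂ G)) (GroupAlgebra.counit G)) J) = 1

/-- A twist for the group algebra `ℂ[G]`: an invertible element of `ℂ[G] ⊗ ℂ[G]` satisfying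
`((Δ ⊗ id)(J))·(J ⊗ 1) = ((id ⊗ Δ)(J))·(1 ⊗ J)` and `(ε ⊗ id)(J) = (id ⊗ ε)(J) = 1`. -/
def GroupAlgebra.IsTwist (J : MonoidAlgebra ℂ G ⊗[ℂ] MonoidAlgebra ℂ G) : Prop :=
  IsUnit J ∧ GroupAlgebra.TwistEq G J ∧ GroupAlgebra.CounitEq G J

end

/-- The `ℂ`-linear map `ℂ[A] → ℂ[G]` sending the basis element `a` to `p a`. -/
noncomputable def GroupAlgebra.transport (A G : Type*) [Group A] [Group G] (p : A → G) :
    MonoidAlgebra ℂ A →ₗ[ℂ] MonoidAlgebra ℂ G :=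
  MonoidAlgebra.mapDomainLinearMap ℂ ℂ p

/-- The statement `u · v = 1` in the algebra `ℂ[G] ⊗ ℂ[G]`. -/
noncomputable def GroupAlgebra.MulEqOne (G : Type*) [Group G]
    (u v : MonoidAlgebra ℂ G ⊗[ℂ] MonoidAlgebra ℂ G) : Prop := u * v = 1

/-- The statement `u · v = w` in the algebra `ℂ[G] ⊗ ℂ[G]`. -/
noncomputable def GroupAlgebra.MulEq (G : Type*) [Group G]
    (u v w : MonoidAlgebra ℂ G ⊗[ℂ] MonoidAlgebra ℂ G) : Prop := u * v = w

/-- The element `|A|⁻¹ Σ_{x ∈ A, χ ∈ A*} χ(x)^s · f(x) ⊗ χ` of `ℂ[G̃] ⊗ ℂ[G̃]`, where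
`G̃ = G ⋉ A*` and `A*`, `G` are regarded as subgroups of `G̃`.  Taking `f = π⁻¹` and `s = 1`
gives the element `J̄` of Section 4; taking `f = π⁻¹ ∘ T` and `s = -1` gives its inverse. -/
noncomputable def GroupAlgebra.barJ (G A : Type*) [Group G] [CommGroup A] [Fintype A]
    [Fintype (A →* ℂˣ)] (φt : G →* MulAut (A →* ℂˣ)) (f : A → G) (s : ℤ) :
    MonoidAlgebra ℂ ((A →* ℂˣ) ⋊[φt] G) ⊗[ℂ] MonoidAlgebra ℂ ((A →* ℂˣ) ⋊[φt] G) :=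
  (Fintype.card A : ℂ)⁻¹ •
    ∑ x : A, ∑ χ : A →* ℂˣ,
      ((χ x ^ s : ℂˣ) : ℂ) •
        (MonoidAlgebra.of ℂ ((A →* ℂˣ) ⋊[φt] G) (SemidirectProduct.inr (f x)) ⊗ₜ[ℂ]
          MonoidAlgebra.of ℂ ((A →* ℂˣ) ⋊[φt] G) (SemidirectProduct.inl χ))

/-!
For `a ∈ A` the elements `e_a = |A|⁻¹ Σ_χ χ(a) χ` form a complete family of orthogonal idempotents
in `ℂ[A*] ⊆ ℂ[G̃]`: this is character orthogonality for `A` and for `A*`. In these terms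
`J̄ = Σ_x π⁻¹(x) ⊗ e_x`, and the proposed inverse, reindexed by `x = z⁻¹`, is
`Σ_x π⁻¹(x)⁻¹ ⊗ e_x`, because `π⁻¹(T z) = π⁻¹(z⁻¹)⁻¹`. Sums of the form `Σ_x u_x ⊗ e_x` multiply
componentwise, so the two elements are mutually inverse. `T` is the composite of the bijections
`x ↦ x⁻¹`, `π⁻¹`, `g ↦ g⁻¹` and `π`.
-/

section Characters

variable {A : Type*} [CommGroup A] [Fintype A]

lemma sum_char_eq_ite (χ : A →* ℂˣ) [Decidable (χ = 1)] :
    ∑ a, (χ a : ℂ) = if χ = 1 then (Fintype.card A : ℂ) else 0 := by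
  have hcoe : (Units.coeHom ℂ).comp χ = 1 ↔ χ = 1 := by
    simp only [MonoidHom.ext_iff, MonoidHom.comp_apply, Units.coeHom_apply,
      MonoidHom.one_apply, Units.val_eq_one]
  split_ifs with hχ
  · simp [hχ]
  · exact sum_hom_units_eq_zero _ (mt hcoe.mp hχ)

variable [Fintype (A →* ℂˣ)]

lemma card_char_eq_card : Fintype.card (A →* ℂˣ) = Fintype.card A :=
  Fintype.card_congr (CommGroup.monoidHom_mulEquiv_of_hasEnoughRootsOfUnity A ℂ).some.toEquiv

lemma sum_char_apply_eq_ite [DecidableEq A] (a : A) :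
    ∑ χ : A →* ℂˣ, (χ a : ℂ) = if a = 1 then (Fintype.card A : ℂ) else 0 := by
  have hcoe : (Units.coeHom ℂ).comp (MonoidHom.eval a) = 1 ↔ a = 1 := by
    refine ⟨fun h => ?_, fun h => by ext χ; simp [h]⟩
    by_contra ha
    obtain ⟨χ, hχ⟩ := CommGroup.exists_apply_ne_one_of_hasEnoughRootsOfUnity A ℂ ha
    exact hχ (Units.val_eq_one.mp (DFunLike.congr_fun h χ))
  split_ifs with ha
  · simp [ha, card_char_eq_card]
  · exact sum_hom_units_eq_zero _ (mt hcoe.mp ha)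

variable {H : Type*} [Monoid H] (ι : (A →* ℂˣ) →* H)

noncomputable def charIdempotent (a : A) : MonoidAlgebra ℂ H :=
  (Fintype.card A : ℂ)⁻¹ • ∑ χ : A →* ℂˣ, (χ a : ℂ) • MonoidAlgebra.of ℂ H (ι χ)

lemma charIdempotent_mul_of (a : A) (ψ : A →* ℂˣ) :
    charIdempotent ι a * MonoidAlgebra.of ℂ H (ι ψ) = ((ψ a)⁻¹ : ℂ) • charIdempotent ι a := by
  rw [charIdempotent, smul_mul_assoc, smul_comm ((ψ a)⁻¹ : ℂ)]
  congr 1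
  rw [Finset.sum_mul, Finset.smul_sum]
  refine Fintype.sum_equiv (Equiv.mulRight ψ) _ _ fun χ => ?_
  rw [smul_mul_assoc, ← map_mul, ← map_mul, smul_smul]
  simp [mul_comm (χ a : ℂ)]

lemma charIdempotent_mul [DecidableEq A] (a b : A) :
    charIdempotent ι a * charIdempotent ι b = if a = b then charIdempotent ι a else 0 := by
  have hsum : ∑ ψ : A →* ℂˣ, (ψ b : ℂ) * (ψ a : ℂ)⁻¹ =
      if a = b then (Fintype.card A : ℂ) else 0 := by
    simpa [mul_inv_eq_one, eq_comm] using sum_char_apply_eq_ite (b * a⁻¹)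
  have hcard : (Fintype.card A : ℂ) ≠ 0 := Nat.cast_ne_zero.mpr Fintype.card_ne_zero
  calc charIdempotent ι a * charIdempotent ι b
      = (Fintype.card A : ℂ)⁻¹ • ∑ ψ : A →* ℂˣ,
          (ψ b : ℂ) • (charIdempotent ι a * MonoidAlgebra.of ℂ H (ι ψ)) := by
        nth_rw 2 [charIdempotent]
        simp_rw [mul_smul_comm, Finset.mul_sum, mul_smul_comm]
    _ = ((Fintype.card A : ℂ)⁻¹ * ∑ ψ : A →* ℂˣ, (ψ b : ℂ) * (ψ a : ℂ)⁻¹) •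
          charIdempotent ι a := by
        simp only [charIdempotent_mul_of, smul_smul, ← Finset.sum_smul]
    _ = if a = b then charIdempotent ι a else 0 := by
        rw [hsum]
        split_ifs <;> simp [hcard]

lemma sum_charIdempotent : ∑ a : A, charIdempotent ι a = 1 := by
  classical
  have hcard : (Fintype.card A : ℂ) ≠ 0 := Nat.cast_ne_zero.mpr Fintype.card_ne_zero
  simp_rw [charIdempotent, ← Finset.smul_sum]
  rw [Finset.sum_comm]
  simp_rw [← Finset.sum_smul, sum_char_eq_ite, ite_smul, zero_smul, Finset.sum_ite_eq']
  simp [hcard, MonoidAlgebra.one_def]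

lemma completeOrthogonalIdempotents_charIdempotent :
    CompleteOrthogonalIdempotents (charIdempotent ι : A → MonoidAlgebra ℂ H) := by
  classical
  exact ⟨OrthogonalIdempotents.iff_mul_eq.mpr (charIdempotent_mul ι), sum_charIdempotent ι⟩

end Characters

lemma sum_tmul_mul_sum_tmul_eq_one {k R S ι : Type*} [CommSemiring k] [Semiring R] [Semiring S]
    [Algebra k R] [Algebra k S] [Fintype ι] {e : ι → S} (he : CompleteOrthogonalIdempotents e)
    {u v : ι → R} (huv : ∀ i, u i * v i = 1) :
    (∑ i, u i ⊗ₜ[k] e i) * (∑ i, v i ⊗ₜ[k] e i) = 1 := by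
  classical
  simp_rw [Finset.sum_mul_sum, Algebra.TensorProduct.tmul_mul_tmul, he.mul_eq, tmul_ite,
    Finset.sum_ite_eq, Finset.mem_univ, if_true, huv, ← tmul_sum, he.complete,
    Algebra.TensorProduct.one_def]

namespace GroupAlgebra

variable {G A : Type*} [Group G] [CommGroup A] [Fintype A] [Fintype (A →* ℂˣ)]
  (φt : G →* MulAut (A →* ℂˣ))

lemma barJ_eq_sum_tmul_charIdempotent (f : A → G) (s : ℤ) :
    barJ G A φt f s = ∑ x : A, MonoidAlgebra.of ℂ _ (SemidirectProduct.inr (f x)) ⊗ₜ[ℂ]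
      charIdempotent SemidirectProduct.inl (x ^ s) := by
  simp only [barJ, charIdempotent, tmul_smul, Finset.smul_sum, tmul_sum, map_zpow]

end GroupAlgebra

theorem barJ_invertible_general
    (G A : Type*) [Group G] [CommGroup A] [Fintype A] [Fintype (A →* ℂˣ)]
    (π : G ≃ A)
    (φt : G →* MulAut (A →* ℂˣ)) :
    Function.Bijective (fun x : A => π ((π.symm x⁻¹)⁻¹)) ∧
    GroupAlgebra.MulEqOne ((A →* ℂˣ) ⋊[φt] G)
      (GroupAlgebra.barJ G A φt (fun x => π.symm x) 1)
      (GroupAlgebra.barJ G A φt (fun z => π.symm (π ((π.symm z⁻¹)⁻¹))) (-1)) ∧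
    GroupAlgebra.MulEqOne ((A →* ℂˣ) ⋊[φt] G)
      (GroupAlgebra.barJ G A φt (fun z => π.symm (π ((π.symm z⁻¹)⁻¹))) (-1))
      (GroupAlgebra.barJ G A φt (fun x => π.symm x) 1) := by
  let u : A → MonoidAlgebra ℂ ((A →* ℂˣ) ⋊[φt] G) :=
    fun x => MonoidAlgebra.of ℂ _ (SemidirectProduct.inr (π.symm x))
  let v : A → MonoidAlgebra ℂ ((A →* ℂˣ) ⋊[φt] G) :=
    fun x => MonoidAlgebra.of ℂ _ (SemidirectProduct.inr (π.symm x)⁻¹)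
  have hJ : GroupAlgebra.barJ G A φt (fun x => π.symm x) 1 =
      ∑ x, u x ⊗ₜ[ℂ] charIdempotent SemidirectProduct.inl x := by
    simp [GroupAlgebra.barJ_eq_sum_tmul_charIdempotent, u]
  have hJinv : GroupAlgebra.barJ G A φt (fun z => π.symm (π ((π.symm z⁻¹)⁻¹))) (-1) =
      ∑ x, v x ⊗ₜ[ℂ] charIdempotent SemidirectProduct.inl x := by
    rw [GroupAlgebra.barJ_eq_sum_tmul_charIdempotent]
    exact Fintype.sum_equiv (Equiv.inv A) _ _ fun z => by simp [v]
  have he := completeOrthogonalIdempotents_charIdempotent (A := A)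
    (SemidirectProduct.inl : (A →* ℂˣ) →* (A →* ℂˣ) ⋊[φt] G)
  refine ⟨(((Equiv.inv A).trans π.symm).trans ((Equiv.inv G).trans π)).bijective, ?_, ?_⟩
  · rw [GroupAlgebra.MulEqOne, hJ, hJinv]
    exact sum_tmul_mul_sum_tmul_eq_one he fun x => by
      simp only [u, v, ← map_mul, mul_inv_cancel, map_one]
  · rw [GroupAlgebra.MulEqOne, hJ, hJinv]
    exact sum_tmul_mul_sum_tmul_eq_one he fun x => by
      simp only [u, v, ← map_mul, inv_mul_cancel, map_one]

/-- **Proposition 4.1.** Let `G` be a group, `A` a finite abelian group, `ρ : G → Aut(A)` a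
homomorphism, `π : G → A` a bijective 1-cocycle, `A* = Hom(A, ℂˣ)` and `G̃ = G ⋉ A*` (with `g`
acting on `χ` by `χ ∘ ρ(g)⁻¹`).  Define `T : A → A` by `T(x) = π((π⁻¹(x⁻¹))⁻¹)`, i.e.
`π⁻¹(x⁻¹)·π⁻¹(T(x)) = 1`.  Then `T` is a bijection of `A`, and the element
`J̄ = |A|⁻¹ Σ_{x,χ} χ(x) π⁻¹(x) ⊗ χ` of `ℂ[G̃] ⊗ ℂ[G̃]` is invertible, with inverse
`|A|⁻¹ Σ_{z,τ} τ(z)⁻¹ π⁻¹(T(z)) ⊗ τ`. -/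
theorem barJ_invertible
    (G A : Type*) [Group G] [CommGroup A] [Fintype A] [Fintype (A →* ℂˣ)]
    (ρ : G →* MulAut A) (π : G ≃ A)
    (hπ : ∀ g g' : G, π (g * g') = π g * (ρ g) (π g'))
    (φt : G →* MulAut (A →* ℂˣ))
    (hφt : ∀ (g : G) (χ : A →* ℂˣ) (a : A), (φt g χ) a = χ ((ρ g)⁻¹ a)) :
    Function.Bijective (fun x : A => π ((π.symm x⁻¹)⁻¹)) ∧
    GroupAlgebra.MulEqOne ((A →* ℂˣ) ⋊[φt] G)
      (GroupAlgebra.barJ G A φt (fun x => π.symm x) 1)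
      (GroupAlgebra.barJ G A φt (fun z => π.symm (π ((π.symm z⁻¹)⁻¹))) (-1)) ∧
    GroupAlgebra.MulEqOne ((A →* ℂˣ) ⋊[φt] G)
      (GroupAlgebra.barJ G A φt (fun z => π.symm (π ((π.symm z⁻¹)⁻¹))) (-1))
      (GroupAlgebra.barJ G A φt (fun x => π.symm x) 1) :=
  barJ_invertible_general G A π φt
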